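/- Let F be a field and k, n1, n2, n1', n2' positive integers with n1' ≥ n1 and n1 + n2 = n1' + n2'. Let U11 ∈ F^{k×n1} with rank(U11) = k, Q12 ∈ F^{k×n2}, Q21 ∈ F^{k×n1'}, and U22 ∈ F^{k×n2'}. Let W1 = rowspace(U11 | Q12) and W2 = rowspace(Q21 | U22), both subspaces of F^{n1+n2}. Then dim(W1 ∩ W2) ≤ rank(Q21'), where Q21' ∈ F^{k×n1} is the submatrix of Q21 consisting of its first n1 columns; in particular dim(W1 ∩ W2) ≤ rank(Q21). -/

import Mathlib

/-!
Restricting vectors of `F^{n1+n2}` to their first `n1` coordinates sends `x (U11 | Q12)` to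
`x U11`, so it is injective on `W1` because `U11` has full row rank; and it sends `W2` onto the
row space of `Q21'`. Hence `W1 ∩ W2` embeds linearly into `rowspace(Q21')`.
-/

open Module

/-- The row space of a matrix: the subspace spanned by its rows. -/
noncomputable def rowSpace {F : Type*} [Field F] {k n : ℕ} (M : Matrix (Fin k) (Fin n) F) :
    Submodule F (Fin n → F) := LinearMap.range M.vecMulLinear

/-- Horizontal concatenation `(A | B)` of two matrices with the same number of rows. -/
def hcat {F : Type*} {k n1 n2 : ℕ} (A : Matrix (Fin k) (Fin n1) F)
    (B : Matrix (Fin k) (Fin n2) F) : Matrix (Fin k) (Fin (n1 + n2)) F :=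
  Matrix.of fun i => Fin.append (A i) (B i)

open Matrix

namespace LinearMap

variable {F K V V' : Type*} [Field F] [AddCommGroup K] [Module F K]
  [AddCommGroup V] [Module F V] [AddCommGroup V'] [Module F V']

theorem disjoint_range_ker_of_injective_comp (f : K →ₗ[F] V) (π : V →ₗ[F] V')
    (h : Function.Injective (π ∘ₗ f)) : Disjoint (range f) (ker π) := by
  rw [Submodule.disjoint_def]
  rintro _ ⟨x, rfl⟩ hx
  rw [h (by simpa using hx : (π ∘ₗ f) x = (π ∘ₗ f) 0), map_zero]

theorem finrank_map_eq_of_disjoint_ker (π : V →ₗ[F] V') {L : Submodule F V}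
    (h : Disjoint L (ker π)) : finrank F (L.map π) = finrank F L := by
  rw [← range_domRestrict]
  exact finrank_range_of_inj (injective_domRestrict_iff.mpr h)

theorem finrank_inf_le_finrank_map [FiniteDimensional F V'] (π : V →ₗ[F] V')
    {W₁ : Submodule F V} (W₂ : Submodule F V) (h : Disjoint W₁ (ker π)) :
    finrank F ↥(W₁ ⊓ W₂) ≤ finrank F (W₂.map π) := by
  rw [← finrank_map_eq_of_disjoint_ker π (h.mono_left inf_le_left)]
  exact Submodule.finrank_mono (Submodule.map_mono inf_le_right)

end LinearMap

theorem finrank_rowSpace {F : Type*} [Field F] {k n : ℕ} (M : Matrix (Fin k) (Fin n) F) :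
    finrank F ↥(rowSpace M) = M.rank := by
  rw [rowSpace, ← Matrix.mulVecLin_transpose, ← Matrix.rank, Matrix.rank_transpose]

theorem Matrix.funLeft_comp_vecMulLinear {R l m n₀ : Type*} [CommSemiring R] [Fintype l]
    (M : Matrix l m R) (c : n₀ → m) :
    LinearMap.funLeft R R c ∘ₗ M.vecMulLinear = (M.submatrix id c).vecMulLinear :=
  rfl

theorem rowSpace_map_funLeft {F : Type*} [Field F] {k n n₀ : ℕ} (M : Matrix (Fin k) (Fin n) F)
    (c : Fin n₀ → Fin n) :
    (rowSpace M).map (LinearMap.funLeft F F c) = rowSpace (M.submatrix id c) := by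
  rw [rowSpace, rowSpace, ← LinearMap.range_comp, funLeft_comp_vecMulLinear]

theorem Matrix.vecMul_injective_of_rank_eq_card {F m n : Type*} [Field F] [Fintype m] [Fintype n]
    {A : Matrix m n F} (h : A.rank = Fintype.card m) : Function.Injective (vecMul · A) := by
  rw [vecMul_injective_iff, linearIndependent_iff_card_eq_finrank_span, ← h,
    rank_eq_finrank_span_row]
  rfl

theorem hcat_submatrix_castAdd {F : Type*} {k n₁ n₂ : ℕ} (A : Matrix (Fin k) (Fin n₁) F)
    (B : Matrix (Fin k) (Fin n₂) F) : (hcat A B).submatrix id (Fin.castAdd n₂) = A := by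
  ext i j
  simp [hcat]

theorem dim_inter_le_rank_first_columns_general (F : Type*) [Field F]
    (k n1 n2 n1' n2' : ℕ) (h1 : n1 ≤ n1') (hsum : n1 + n2 = n1' + n2')
    (U11 : Matrix (Fin k) (Fin n1) F) (hU11 : U11.rank = k)
    (Q12 : Matrix (Fin k) (Fin n2) F)
    (Q21 : Matrix (Fin k) (Fin n1') F) (U22 : Matrix (Fin k) (Fin n2') F) :
    finrank F ↥(rowSpace (hcat U11 Q12) ⊓
        rowSpace ((hcat Q21 U22).submatrix id (Fin.cast hsum))) ≤
      (Q21.submatrix id (Fin.castLE h1)).rank ∧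
    finrank F ↥(rowSpace (hcat U11 Q12) ⊓
        rowSpace ((hcat Q21 U22).submatrix id (Fin.cast hsum))) ≤ Q21.rank := by
  set π := LinearMap.funLeft F F (Fin.castAdd n2 : Fin n1 → Fin (n1 + n2))
  have hdisj : Disjoint (rowSpace (hcat U11 Q12)) (LinearMap.ker π) := by
    refine LinearMap.disjoint_range_ker_of_injective_comp _ π ?_
    rw [funLeft_comp_vecMulLinear, hcat_submatrix_castAdd]
    exact vecMul_injective_of_rank_eq_card (hU11.trans (Fintype.card_fin k).symm)
  have hmap : (rowSpace ((hcat Q21 U22).submatrix id (Fin.cast hsum))).map π =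
      rowSpace (Q21.submatrix id (Fin.castLE h1)) := by
    rw [rowSpace_map_funLeft, submatrix_submatrix,
      show Fin.cast hsum ∘ Fin.castAdd n2 = Fin.castAdd n2' ∘ Fin.castLE h1 from rfl,
      ← submatrix_submatrix, hcat_submatrix_castAdd]
  have hmain := LinearMap.finrank_inf_le_finrank_map π
    (rowSpace ((hcat Q21 U22).submatrix id (Fin.cast hsum))) hdisj
  rw [hmap, finrank_rowSpace] at hmain
  exact ⟨hmain, hmain.trans (rank_submatrix_le _ _ _)⟩

/-- If `U11 ∈ F^{k×n1}` has full rank `k`, `W1 = rowspace(U11 | Q12)` and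
`W2 = rowspace(Q21 | U22)` (with `n1' ≥ n1` and `n1 + n2 = n1' + n2'`, both subspaces of
`F^{n1+n2}`), then `dim(W1 ∩ W2)` is at most the rank of the submatrix `Q21'` of `Q21`
consisting of its first `n1` columns; in particular `dim(W1 ∩ W2) ≤ rank(Q21)`. -/
theorem dim_inter_le_rank_first_columns (F : Type*) [Field F]
    (k n1 n2 n1' n2' : ℕ) (hk : 0 < k) (hn1 : 0 < n1) (hn2 : 0 < n2)
    (hn1' : 0 < n1') (hn2' : 0 < n2') (h1 : n1 ≤ n1') (hsum : n1 + n2 = n1' + n2')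
    (U11 : Matrix (Fin k) (Fin n1) F) (hU11 : U11.rank = k)
    (Q12 : Matrix (Fin k) (Fin n2) F)
    (Q21 : Matrix (Fin k) (Fin n1') F) (U22 : Matrix (Fin k) (Fin n2') F) :
    finrank F ↥(rowSpace (hcat U11 Q12) ⊓
        rowSpace ((hcat Q21 U22).submatrix id (Fin.cast hsum))) ≤
      (Q21.submatrix id (Fin.castLE h1)).rank ∧
    finrank F ↥(rowSpace (hcat U11 Q12) ⊓
        rowSpace ((hcat Q21 U22).submatrix id (Fin.cast hsum))) ≤ Q21.rank :=
  dim_inter_le_rank_first_columns_general F k n1 n2 n1' n2' h1 hsum U11 hU11 Q12 Q21 U22
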